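/- arXiv:1708.00910 — 2 statements merged into one kernel-verified Lean document; each statement's English description precedes it below -/
import Mathlib

section
/- If 1 ≤ p < q < ∞, then the space of pointwise multipliers from L^p(𝕋) to L^q(𝕋) is trivial: the only measurable function a such that a·f ∈ L^q(𝕋) for every f ∈ L^p(𝕋) is a = 0 a.e. -/
open MeasureTheory Filter Topology ComplexConjugate
open scoped ENNReal

noncomputable section

instance fact_two_pi_pos : Fact (0 < 2 * Real.pi) := ⟨by positivity⟩

/-- The unit circle, modelled additively as `ℝ / 2πℤ`. -/
abbrev 𝕋 := AddCircle (2 * Real.pi)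

/-- Normalized Lebesgue (Haar) measure on the circle. -/
def μ : Measure 𝕋 := AddCircle.haarAddCircle

/-- A (quasi-)norm functional on measurable functions on the circle, with values in `ℝ≥0∞`. -/
abbrev NormFn := (𝕋 → ℂ) → ℝ≥0∞

/-- Membership in the function space determined by the norm functional `N`. -/
def MemN (N : NormFn) (f : 𝕋 → ℂ) : Prop :=
  AEStronglyMeasurable f μ ∧ N f < ⊤

/-- The closed unit ball of the space determined by `N`. -/
def unitBall (N : NormFn) : Set (𝕋 → ℂ) :=
  {f | AEStronglyMeasurable f μ ∧ N f ≤ 1}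

/-- The Köthe dual (associate space) norm of `N`. -/
def kdualN (N : NormFn) : NormFn := fun g =>
  ⨆ f : unitBall N, ∫⁻ t, (‖f.1 t * g t‖₊ : ℝ≥0∞) ∂μ

/-- The norm of the space `M(X,Y)` of pointwise multipliers, i.e. the operator norm of
multiplication by `a` from the space of `NX` to the space of `NY`. -/
def multN (NX NY : NormFn) : NormFn := fun a =>
  ⨆ f : unitBall NX, NY (fun t => a t * f.1 t)

/-- The norm of the pointwise product space `X ⊙ Y`. -/
def prodN (NX NY : NormFn) : NormFn := fun h =>
  ⨅ p : {p : (𝕋 → ℂ) × (𝕋 → ℂ) //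
      AEStronglyMeasurable p.1 μ ∧ AEStronglyMeasurable p.2 μ ∧
      h =ᵐ[μ] fun t => p.1 t * p.2 t},
    NX p.1.1 * NY p.1.2

/-- Membership in the Hardy space `H[X]`: membership in `X` together with the vanishing of all
negative Fourier coefficients. -/
def HardyMemN (N : NormFn) (f : 𝕋 → ℂ) : Prop :=
  AEStronglyMeasurable f μ ∧ N f < ⊤ ∧ ∀ n : ℤ, n < 0 → fourierCoeff f n = 0

/-- Operator norm of `T` from the space of `N1` to that of `N2`. -/
def opN (N1 N2 : NormFn) (T : (𝕋 → ℂ) → (𝕋 → ℂ)) : ℝ≥0∞ :=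
  ⨆ f : unitBall N1, N2 (T f.1)

/-- Operator norm of `T` restricted to the Hardy space of `N1`, measured in `N2`. -/
def hardyOpN (N1 N2 : NormFn) (T : (𝕋 → ℂ) → (𝕋 → ℂ)) : ℝ≥0∞ :=
  ⨆ f : {f : 𝕋 → ℂ // HardyMemN N1 f ∧ N1 f ≤ 1}, N2 (T f.1)

/-- `P` is (a realization of) the Riesz projection: it respects a.e. equality and, on integrable
functions, keeps the Fourier coefficients with nonnegative index and kills the others. -/
def IsRieszProj (P : (𝕋 → ℂ) → (𝕋 → ℂ)) : Prop :=
  (∀ f g, f =ᵐ[μ] g → P f =ᵐ[μ] P g) ∧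
  (∀ f g, P (f + g) =ᵐ[μ] P f + P g) ∧
  (∀ (c : ℂ) f, P (fun t => c * f t) =ᵐ[μ] fun t => c * P f t) ∧
  (∀ f, Integrable f μ → Integrable (P f) μ ∧
    ∀ n : ℤ, fourierCoeff (P f) n = if 0 ≤ n then fourierCoeff f n else 0)

/-- The flip operator `(Jf)(t) = t⁻¹ f(t⁻¹)`, written additively on `ℝ/2πℤ`. -/
def Jflip (f : 𝕋 → ℂ) : 𝕋 → ℂ := fun x => fourier (-1) x * f (-x)

/-- The dilation operator `D_s`: `(D_s f)(e^{iθ}) = f(e^{iθs})` for `θs ∈ [0,2π)`, `0` otherwise. -/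
def dilOp (s : ℝ) (f : 𝕋 → ℂ) : 𝕋 → ℂ := fun x =>
  let θ : ℝ := (AddCircle.equivIco (2 * Real.pi) 0 x : ℝ)
  if 0 ≤ s * θ ∧ s * θ < 2 * Real.pi then f ((s * θ : ℝ) : 𝕋) else 0

/-- Operator norm of the dilation `D_s` on the space of `N`. -/
def dilNorm (N : NormFn) (s : ℝ) : ℝ≥0∞ :=
  ⨆ f : unitBall N, N (dilOp s f.1)

/-- `α` is the lower Boyd index of the space of `N`. -/
def boydLower (N : NormFn) (α : ℝ) : Prop :=
  Tendsto (fun s : ℝ => Real.log (dilNorm N (1 / s)).toReal / Real.log s) (𝓝[>] 0) (𝓝 α)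

/-- `β` is the upper Boyd index of the space of `N`. -/
def boydUpper (N : NormFn) (β : ℝ) : Prop :=
  Tendsto (fun s : ℝ => Real.log (dilNorm N (1 / s)).toReal / Real.log s) atTop (𝓝 β)

/-- The space of `N` has nontrivial Boyd indices. -/
def NontrivialBoyd (N : NormFn) : Prop :=
  ∃ α β : ℝ, 0 < α ∧ β < 1 ∧ boydLower N α ∧ boydUpper N β

/-- Trigonometric polynomials. -/
def IsTrigPoly (f : 𝕋 → ℂ) : Prop :=
  ∃ (n : ℕ) (c : ℤ → ℂ), f = fun x => ∑ k ∈ Finset.Icc (-(n : ℤ)) n, c k * fourier k x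

/-- Analytic trigonometric polynomials. -/
def IsAnalyticPoly (f : 𝕋 → ℂ) : Prop :=
  ∃ (n : ℕ) (c : ℕ → ℂ), f = fun x => ∑ k ∈ Finset.range (n + 1), c k * fourier (k : ℤ) x

/-- The Fejér kernel `K_n`. -/
def fejer (n : ℕ) : 𝕋 → ℂ := fun x =>
  ∑ k ∈ Finset.Icc (-(n : ℤ)) n, (1 - (|(k : ℝ)| / (n + 1)) : ℂ) * fourier k x

/-- Convolution with the Fejér kernel, `f * K_n`. -/
def convFejer (n : ℕ) (f : 𝕋 → ℂ) : 𝕋 → ℂ := fun x =>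
  ∫ y, f y * fejer n (x - y) ∂μ

/-- The Banach envelope norm of `N`. -/
def envN (N : NormFn) : NormFn := fun f =>
  ⨅ d : {d : Σ n : ℕ, Fin n → 𝕋 → ℂ // f =ᵐ[μ] fun t => ∑ i, d.2 i t},
    ∑ i, N (d.1.2 i)

/-- The Banach envelope norm of the Hardy space `H[Z]` (decompositions within `H[Z]`). -/
def envHardyN (N : NormFn) : NormFn := fun f =>
  ⨅ d : {d : Σ n : ℕ, Fin n → 𝕋 → ℂ //
      (∀ i, HardyMemN N (d.2 i)) ∧ f =ᵐ[μ] fun t => ∑ i, d.2 i t},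
    ∑ i, N (d.1.2 i)

/-- The norm of the 1/2-concavification `Z^{(1/2)}`: `‖f‖ = ‖|f|^{1/2}‖²`. -/
def concavHalf (N : NormFn) : NormFn := fun f =>
  (N (fun t => (Real.sqrt ‖f t‖ : ℂ))) ^ 2

/-- `dist_{M(X,Y)}(a, conj H[M(X,Y)])`: the infimum of multiplier norms of symbols `b` whose
Fourier coefficients agree with those of `a` for positive indices. -/
def hankelDist (NX NY : NormFn) (a : 𝕋 → ℂ) : ℝ≥0∞ :=
  ⨅ b : {b : 𝕋 → ℂ // AEStronglyMeasurable b μ ∧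
      ∀ k : ℤ, 0 < k → fourierCoeff b k = fourierCoeff a k},
    multN NX NY b.1

/-- The Kuratowski measure of noncompactness of the set `A`, with diameters measured by `N`. -/
def setMNC (N : NormFn) (A : Set (𝕋 → ℂ)) : ℝ≥0∞ :=
  ⨅ d : {d : ℝ≥0∞ // ∃ (n : ℕ) (B : Fin n → Set (𝕋 → ℂ)),
      (∀ f ∈ A, ∃ i, f ∈ B i) ∧
      ∀ i, ∀ f ∈ B i, ∀ g ∈ B i, N (fun t => f t - g t) ≤ d}, d.1

/-- The decreasing rearrangement `f*` of `f`. -/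
def decRearr (f : 𝕋 → ℂ) (s : ℝ) : ℝ≥0∞ :=
  sInf {l : ℝ≥0∞ | μ {t | l < (‖f t‖₊ : ℝ≥0∞)} ≤ ENNReal.ofReal s}

/-- The Lorentz norm `‖f‖_{L^{p,q}}` on the circle (total measure 1). -/
def lorentzN (p q : ℝ≥0∞) : NormFn := fun f =>
  if q = ⊤ then ⨆ s : Set.Ioo (0 : ℝ) 1, decRearr f s.1 * ENNReal.ofReal (s.1 ^ (1 / p).toReal)
  else (∫⁻ s in Set.Ioo (0 : ℝ) 1,
      (decRearr f s * ENNReal.ofReal (s ^ (1 / p).toReal)) ^ q.toReal / ENNReal.ofReal s)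
    ^ (1 / q).toReal

/-- `dist_{L^{p,q}}(a, conj H^{p,q})` expressed via matching of positive Fourier coefficients. -/
def lorDist (p q : ℝ≥0∞) (a : 𝕋 → ℂ) : ℝ≥0∞ :=
  ⨅ b : {b : 𝕋 → ℂ // AEStronglyMeasurable b μ ∧
      ∀ k : ℤ, 0 < k → fourierCoeff b k = fourierCoeff a k},
    lorentzN p q b.1

/-- The analytic polynomial with coefficients `c 0, …, c n`. -/
def aPoly (n : ℕ) (c : ℕ → ℂ) : 𝕋 → ℂ := fun x =>
  ∑ k ∈ Finset.range (n + 1), c k * fourier (k : ℤ) x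

/-- The polynomial `p^c(t) = conj (p(1/t))`, i.e. with conjugated coefficients. -/
def aPolyC (n : ℕ) (c : ℕ → ℂ) : 𝕋 → ℂ := aPoly n fun k => (starRingEnd ℂ) (c k)

/-- A Banach function space over the circle, encoded by its norm functional. -/
structure BFS where
  N : NormFn
  ae_congr : ∀ f g, f =ᵐ[μ] g → N f = N g
  add_le : ∀ f g, N (f + g) ≤ N f + N g
  smul_eq : ∀ (c : ℂ) (f), N (fun t => c * f t) = (‖c‖₊ : ℝ≥0∞) * N f
  ideal : ∀ f g, AEStronglyMeasurable g μ → (∀ᵐ t ∂μ, ‖g t‖ ≤ ‖f t‖) → N g ≤ N f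
  const_finite : N (fun _ => 1) < ⊤
  norm_eq_zero : ∀ f, AEStronglyMeasurable f μ → N f = 0 → f =ᵐ[μ] fun _ => 0
  semiFatou : ∀ (f : ℕ → 𝕋 → ℂ) (g : 𝕋 → ℂ),
    (∀ n, AEStronglyMeasurable (f n) μ) → AEStronglyMeasurable g μ →
    (∀ᵐ t ∂μ, Monotone (fun n => ‖f n t‖) ∧
      Tendsto (fun n => ‖f n t‖) atTop (𝓝 ‖g t‖)) →
    N g < ⊤ → N g = ⨆ n, N (f n)
  complete : ∀ f : ℕ → 𝕋 → ℂ, (∀ n, AEStronglyMeasurable (f n) μ) →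
    (∑' n, N (f n)) < ⊤ →
    ∃ g, AEStronglyMeasurable g μ ∧ N g < ⊤ ∧
      Tendsto (fun n => N (fun t => g t - ∑ k ∈ Finset.range n, f k t)) atTop (𝓝 0)

/-- A quasi-Banach function space over the circle, with quasi-triangle constant `kappa`. -/
structure QBFS where
  N : NormFn
  kappa : ℝ≥0∞
  one_le_kappa : 1 ≤ kappa
  kappa_finite : kappa < ⊤
  ae_congr : ∀ f g, f =ᵐ[μ] g → N f = N g
  add_le : ∀ f g, N (f + g) ≤ kappa * (N f + N g)
  smul_eq : ∀ (c : ℂ) (f), N (fun t => c * f t) = (‖c‖₊ : ℝ≥0∞) * N f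
  ideal : ∀ f g, AEStronglyMeasurable g μ → (∀ᵐ t ∂μ, ‖g t‖ ≤ ‖f t‖) → N g ≤ N f
  const_finite : N (fun _ => 1) < ⊤
  norm_eq_zero : ∀ f, AEStronglyMeasurable f μ → N f = 0 → f =ᵐ[μ] fun _ => 0
  semiFatou : ∀ (f : ℕ → 𝕋 → ℂ) (g : 𝕋 → ℂ),
    (∀ n, AEStronglyMeasurable (f n) μ) → AEStronglyMeasurable g μ →
    (∀ᵐ t ∂μ, Monotone (fun n => ‖f n t‖) ∧
      Tendsto (fun n => ‖f n t‖) atTop (𝓝 ‖g t‖)) →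
    N g < ⊤ → N g = ⨆ n, N (f n)

/-- Rearrangement invariance of the norm functional `N`. -/
def RearrInvN (N : NormFn) : Prop :=
  ∀ f g, AEStronglyMeasurable f μ → AEStronglyMeasurable g μ →
    (∀ lam : ℝ, 0 < lam → μ {t | lam < ‖f t‖} = μ {t | lam < ‖g t‖}) →
    N f = N g

/-- `f` is an order continuous element of the space of `N`. -/
def OrderContElemN (N : NormFn) (f : 𝕋 → ℂ) : Prop :=
  MemN N f ∧ ∀ g : ℕ → 𝕋 → ℂ, (∀ n, AEStronglyMeasurable (g n) μ) →
    (∀ n, ∀ᵐ t ∂μ, ‖g n t‖ ≤ ‖f t‖) →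
    (∀ᵐ t ∂μ, Tendsto (fun n => ‖g n t‖) atTop (𝓝 0)) →
    Tendsto (fun n => N (g n)) atTop (𝓝 0)

/-- The space of `N` is order continuous (equivalently, separable). -/
def OrderContN (N : NormFn) : Prop :=
  ∀ f, MemN N f → OrderContElemN N f

/-- The Fatou property of the norm functional `N`. -/
def FatouN (N : NormFn) : Prop :=
  ∀ (f : ℕ → 𝕋 → ℂ) (g : 𝕋 → ℂ),
    (∀ n, AEStronglyMeasurable (f n) μ) → AEStronglyMeasurable g μ →
    (∀ᵐ t ∂μ, Monotone (fun n => ‖f n t‖) ∧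
      Tendsto (fun n => ‖f n t‖) atTop (𝓝 ‖g t‖)) →
    N g = ⨆ n, N (f n)

/-!
If `a` is not a.e. zero, then `ε < ‖a‖` on a set `E` of positive measure. Haar measure on the
circle has no atoms (cutting `E` by arcs and applying the intermediate value theorem halves it),
so `E` contains disjoint sets `A n` with `μ (A n) = μ E / 2 ^ (n + 1)`. The function
`f = ∑ μ (A n) ^ (-1/q) 𝟙_{A n}` then has `‖f‖_p^p = ∑ μ (A n) ^ (1 - p/q) < ∞` because `p < q`,
whereas `‖a f‖_q^q ≥ ε ^ q ∑ 1 = ∞`.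
-/

open Function

theorem tsum_indicator_comp {ι α M N : Type*} [AddCommMonoid M] [TopologicalSpace M]
    [AddCommMonoid N] [TopologicalSpace N] {A : ι → Set α} (hA : Pairwise (Disjoint on A))
    (c : ι → M) {g : M → N} (hg : g 0 = 0) (t : α) :
    g (∑' i, (A i).indicator (fun _ => c i) t) = ∑' i, (A i).indicator (fun _ => g (c i)) t := by
  by_cases ht : ∃ j, t ∈ A j
  · obtain ⟨j, hj⟩ := ht
    have hnot : ∀ i ≠ j, t ∉ A i := fun i hij hi => Set.disjoint_left.1 (hA hij) hi hj
    rw [tsum_eq_single j fun i hi => Set.indicator_of_notMem (hnot i hi) _,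
      tsum_eq_single j fun i hi => Set.indicator_of_notMem (hnot i hi) _,
      Set.indicator_of_mem hj, Set.indicator_of_mem hj]
  · simp only [not_exists] at ht
    simp [Set.indicator_of_notMem (ht _), hg]

theorem lintegral_tsum_indicator_const {ι α : Type*} [Countable ι] [MeasurableSpace α]
    {μ : Measure α} {A : ι → Set α} (hA : ∀ i, MeasurableSet (A i)) (c : ι → ℝ≥0∞) :
    ∫⁻ t, ∑' i, (A i).indicator (fun _ => c i) t ∂μ = ∑' i, c i * μ (A i) := by
  rw [lintegral_tsum fun i => (measurable_const.indicator (hA i)).aemeasurable]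
  exact tsum_congr fun i => lintegral_indicator_const (hA i) (c i)

theorem RCLike.enorm_ofReal_toReal {𝕜 : Type*} [RCLike 𝕜] {x : ℝ≥0∞} (hx : x ≠ ⊤) :
    ‖(x.toReal : 𝕜)‖ₑ = x := by
  rw [← ofReal_norm, RCLike.norm_ofReal, abs_of_nonneg ENNReal.toReal_nonneg,
    ENNReal.ofReal_toReal hx]

theorem exists_memLp_not_memLp_mul {α 𝕜 : Type*} [MeasurableSpace α] [RCLike 𝕜]
    {μ : Measure α} [IsFiniteMeasure μ] {p q : ℝ≥0∞} (hp : p ≠ 0) (hpq : p < q) (hq : q ≠ ⊤)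
    {A : ℕ → Set α} (hA_disj : Pairwise (Disjoint on A)) (hA_meas : ∀ n, MeasurableSet (A n))
    (hA0 : ∀ n, μ (A n) ≠ 0) (hA_sum : ∑' n, μ (A n) ^ (1 - p.toReal / q.toReal) ≠ ⊤)
    {a : α → 𝕜} {ε : ℝ≥0∞} (hε : ε ≠ 0) (ha : ∀ n, ∀ t ∈ A n, ε ≤ ‖a t‖ₑ) :
    ∃ f : α → 𝕜, MemLp f p μ ∧ ¬ MemLp (fun t => a t * f t) q μ := by
  have hp_top : p ≠ ⊤ := (hpq.trans_le le_top).ne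
  have hq0 : q ≠ 0 := (hpq.trans' (pos_iff_ne_zero.2 hp)).ne'
  have hp_pos : 0 < p.toReal := ENNReal.toReal_pos hp hp_top
  have hq_pos : 0 < q.toReal := ENNReal.toReal_pos hq0 hq
  -- `c n ^ q * μ (A n) = 1`: every `A n` contributes `1` to `‖a f‖_q^q` (up to `ε ^ q`)
  set c : ℕ → ℝ≥0∞ := fun n => μ (A n) ^ (-q.toReal⁻¹)
  have hc_top : ∀ n, c n ≠ ⊤ := fun n =>
    ENNReal.rpow_ne_top_of_ne_zero (hA0 n) (measure_ne_top μ _)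
  have hc_rpow : ∀ n (r : ℝ), c n ^ r * μ (A n) = μ (A n) ^ (1 - r / q.toReal) := by
    intro n r
    rw [← ENNReal.rpow_mul]
    nth_rw 2 [← ENNReal.rpow_one (μ (A n))]
    rw [← ENNReal.rpow_add _ _ (hA0 n) (measure_ne_top μ _)]
    ring_nf
  set f : α → 𝕜 := fun t => ((∑' n, (A n).indicator (fun _ => c n) t).toReal : 𝕜)
  have hf_meas : Measurable f := RCLike.measurable_ofReal.comp
    (Measurable.tsum fun n => measurable_const.indicator (hA_meas n)).ennreal_toReal
  have hf_enorm : ∀ {r : ℝ}, 0 < r →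
      ∀ t, ‖f t‖ₑ ^ r = ∑' n, (A n).indicator (fun _ => c n ^ r) t := by
    intro r hr t
    refine (tsum_indicator_comp hA_disj c (g := fun x => ‖(x.toReal : 𝕜)‖ₑ ^ r)
      (by simp [hr]) t).trans ?_
    simp only [RCLike.enorm_ofReal_toReal (hc_top _)]
  refine ⟨f, ⟨hf_meas.aestronglyMeasurable, ?_⟩, fun hf_mul => ?_⟩
  · rw [eLpNorm_lt_top_iff_lintegral_rpow_enorm_lt_top hp hp_top]
    simp_rw [hf_enorm hp_pos, lintegral_tsum_indicator_const hA_meas, hc_rpow]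
    exact hA_sum.lt_top
  have hlower : ∀ t, ∑' n, (A n).indicator (fun _ => ε ^ q.toReal * c n ^ q.toReal) t ≤
      ‖a t * f t‖ₑ ^ q.toReal := by
    intro t
    rw [enorm_mul, ENNReal.mul_rpow_of_nonneg _ _ hq_pos.le, hf_enorm hq_pos,
      ← ENNReal.tsum_mul_left]
    refine ENNReal.tsum_le_tsum fun n => ?_
    by_cases ht : t ∈ A n
    · simp only [Set.indicator_of_mem ht]
      gcongr
      exact ha n t ht
    · simp [Set.indicator_of_notMem ht]
  have hεq : ε ^ q.toReal ≠ 0 := (ENNReal.rpow_pos_of_nonneg (pos_iff_ne_zero.2 hε) hq_pos.le).ne'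
  refine ((eLpNorm_lt_top_iff_lintegral_rpow_enorm_lt_top hq0 hq).1 hf_mul.2).ne (top_unique ?_)
  calc ⊤ = ∑' n : ℕ, ε ^ q.toReal := (ENNReal.tsum_const_eq_top_of_ne_zero hεq).symm
    _ = ∫⁻ t, ∑' n, (A n).indicator (fun _ => ε ^ q.toReal * c n ^ q.toReal) t ∂μ := by
      simp_rw [lintegral_tsum_indicator_const hA_meas, mul_assoc, hc_rpow, div_self hq_pos.ne',
        sub_self, ENNReal.rpow_zero, mul_one]
    _ ≤ _ := lintegral_mono hlower

theorem ENNReal.tsum_mul_pow_rpow_ne_top {δ r : ℝ≥0∞} (hδ : δ ≠ ⊤) (hr : r < 1) {θ : ℝ}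
    (hθ : 0 < θ) : ∑' n : ℕ, (δ * r ^ n) ^ θ ≠ ⊤ := by
  have hrθ : r ^ θ < 1 := ENNReal.rpow_lt_one hr hθ
  simp_rw [ENNReal.mul_rpow_of_nonneg _ _ hθ.le, ← ENNReal.rpow_natCast, ← ENNReal.rpow_mul,
    mul_comm _ θ, ENNReal.rpow_mul, ENNReal.rpow_natCast]
  rw [ENNReal.tsum_mul_left, ENNReal.tsum_geometric]
  exact ENNReal.mul_ne_top (ENNReal.rpow_ne_top_of_nonneg hθ.le hδ)
    (ENNReal.inv_ne_top.2 (tsub_pos_of_lt hrθ).ne')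

theorem exists_measure_lt_enorm_ne_zero {α E : Type*} [MeasurableSpace α] {μ : Measure α}
    [NormedAddCommGroup E] {a : α → E} (ha : ¬ a =ᵐ[μ] 0) :
    ∃ ε : ℝ≥0∞, ε ≠ 0 ∧ μ {t | ε < ‖a t‖ₑ} ≠ 0 := by
  by_contra! h
  refine ha (measure_mono_null (fun t (ht : a t ≠ 0) => ?_)
    (measure_iUnion_null fun n : ℕ => h (n : ℝ≥0∞)⁻¹ (by simp)))
  exact Set.mem_iUnion.2 (ENNReal.exists_inv_nat_lt (enorm_ne_zero.2 ht))

theorem exists_pairwise_disjoint_measure_eq_mul_inv_two_pow {α : Type*} [MeasurableSpace α]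
    {ν : Measure α} (halve : ∀ s, MeasurableSet s → ∃ t ⊆ s, MeasurableSet t ∧ ν t = ν s / 2)
    {E : Set α} (hE : MeasurableSet E) (hE_top : ν E ≠ ⊤) :
    ∃ A : ℕ → Set α, Pairwise (Disjoint on A) ∧ (∀ n, MeasurableSet (A n)) ∧ (∀ n, A n ⊆ E) ∧
      ∀ n, ν (A n) = ν E * 2⁻¹ ^ (n + 1) := by
  choose! H hH_sub hH_meas hH_measure using halve
  set B : ℕ → Set α := fun n => H^[n] E
  have hB_meas : ∀ n, MeasurableSet (B n) := by
    intro n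
    induction n with
    | zero => exact hE
    | succ n ih => simpa only [B, iterate_succ_apply'] using hH_meas _ ih
  have hB_succ : ∀ n, B (n + 1) ⊆ B n := fun n => by
    simpa only [B, iterate_succ_apply'] using hH_sub _ (hB_meas n)
  have hB_measure_succ : ∀ n, ν (B (n + 1)) = ν (B n) / 2 := fun n => by
    simpa only [B, iterate_succ_apply'] using hH_measure _ (hB_meas n)
  have hB_measure : ∀ n, ν (B n) = ν E * 2⁻¹ ^ n := by
    intro n
    induction n with
    | zero => simp [B]
    | succ n ih => rw [hB_measure_succ, ih, div_eq_mul_inv, pow_succ, mul_assoc]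
  have hB_anti : Antitone B := antitone_nat_of_succ_le hB_succ
  refine ⟨fun n => B n \ B (n + 1), ?_, fun n => (hB_meas n).diff (hB_meas _),
    fun n => Set.sdiff_subset.trans (hB_anti (Nat.zero_le n)), fun n => ?_⟩
  · refine (pairwise_disjoint_on _).2 fun m n hmn => ?_
    exact Set.disjoint_sdiff_left.mono_right (Set.sdiff_subset.trans (hB_anti hmn))
  · have hBn_top : ν (B n) ≠ ⊤ := hB_measure n ▸ ENNReal.mul_ne_top hE_top (by simp)
    rw [measure_sdiff (hB_succ n) (hB_meas _).nullMeasurableSet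
        (ne_top_of_le_ne_top hBn_top (measure_mono (hB_succ n))),
      hB_measure_succ, ENNReal.sub_half hBn_top, hB_measure, div_eq_mul_inv, pow_succ, mul_assoc]

theorem exists_subset_measure_eq_of_measure_preimage_Ioc_le {α : Type*} [MeasurableSpace α]
    {ν : Measure α} [IsFiniteMeasure ν] {g : α → ℝ} (hg : Measurable g) {a b : ℝ} (hab : a ≤ b)
    (hg_mem : ∀ t, g t ∈ Set.Ioc a b) {K : ℝ≥0∞} (hK : K ≠ ⊤)
    (hg_le : ∀ x y, ν (g ⁻¹' Set.Ioc x y) ≤ K * ENNReal.ofReal (y - x))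
    {s : Set α} (hs : MeasurableSet s) {c : ℝ≥0∞} (hc : c ≤ ν s) :
    ∃ t ⊆ s, MeasurableSet t ∧ ν t = c := by
  set G : ℝ → ℝ := fun x => (ν (s ∩ g ⁻¹' Set.Iic x)).toReal
  have hG_lip : LipschitzWith K.toNNReal G := by
    refine LipschitzWith.of_le_add_mul _ fun x y => ?_
    have hsub : s ∩ g ⁻¹' Set.Iic x ⊆ (s ∩ g ⁻¹' Set.Iic y) ∪ g ⁻¹' Set.Ioc y x := by
      rintro t ⟨hts, htx⟩
      by_cases hty : g t ≤ y
      · exact Or.inl ⟨hts, hty⟩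
      · exact Or.inr ⟨not_le.1 hty, htx⟩
    have hle : ν (s ∩ g ⁻¹' Set.Iic x) ≤
        ν (s ∩ g ⁻¹' Set.Iic y) + K * ENNReal.ofReal (dist x y) :=
      calc _ ≤ ν (s ∩ g ⁻¹' Set.Iic y) + ν (g ⁻¹' Set.Ioc y x) :=
            (measure_mono hsub).trans (measure_union_le _ _)
        _ ≤ _ := by
          gcongr
          refine (hg_le y x).trans ?_
          gcongr
          exact (le_abs_self _).trans_eq (Real.dist_eq x y).symm
    have := ENNReal.toReal_mono (by finiteness) hle
    rwa [ENNReal.toReal_add (measure_ne_top _ _) (by finiteness), ENNReal.toReal_mul,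
      ENNReal.toReal_ofReal dist_nonneg] at this
  have hGa : G a = 0 := by
    have : s ∩ g ⁻¹' Set.Iic a = ∅ :=
      Set.eq_empty_iff_forall_notMem.2 fun t ht => (hg_mem t).1.not_ge ht.2
    simp [G, this]
  have hGb : G b = (ν s).toReal := by
    have : s ∩ g ⁻¹' Set.Iic b = s := Set.inter_eq_left.2 fun t _ => (hg_mem t).2
    simp [G, this]
  have hc_top : c ≠ ⊤ := ne_top_of_le_ne_top (measure_ne_top ν s) hc
  obtain ⟨x, -, hx⟩ := intermediate_value_Icc hab hG_lip.continuous.continuousOn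
    (show c.toReal ∈ Set.Icc (G a) (G b) from
      ⟨hGa ▸ ENNReal.toReal_nonneg, hGb ▸ ENNReal.toReal_mono (measure_ne_top ν s) hc⟩)
  exact ⟨s ∩ g ⁻¹' Set.Iic x, Set.inter_subset_left, hs.inter (hg measurableSet_Iic),
    (ENNReal.toReal_eq_toReal_iff' (measure_ne_top _ _) hc_top).1 hx⟩

namespace AddCircle

variable {T : ℝ} [Fact (0 < T)]

theorem haarAddCircle_preimage_equivIoc_Ioc_le (x y : ℝ) :
    haarAddCircle ((fun z : AddCircle T => (equivIoc T 0 z : ℝ)) ⁻¹' Set.Ioc x y) ≤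
      (ENNReal.ofReal T)⁻¹ * ENNReal.ofReal (y - x) := by
  have hT0 : ENNReal.ofReal T ≠ 0 := ENNReal.ofReal_ne_zero_iff.2 Fact.out
  set U := (fun z : AddCircle T => (equivIoc T 0 z : ℝ)) ⁻¹' Set.Ioc x y
  have hU : MeasurableSet U :=
    measurable_subtype_coe.comp (measurableEquivIoc T 0).measurable measurableSet_Ioc
  have hvol : volume U ≤ ENNReal.ofReal (y - x) := by
    rw [add_projection_respects_measure T 0 hU, ← Real.volume_Ioc]
    refine measure_mono fun u ⟨huU, hu⟩ => ?_
    simpa [U, equivIoc_coe_eq hu] using huU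
  rw [← ENNReal.inv_mul_cancel_left hT0 ENNReal.ofReal_ne_top (b := haarAddCircle U)]
  gcongr
  rwa [volume_eq_smul_haarAddCircle] at hvol

theorem exists_subset_haarAddCircle_eq {s : Set (AddCircle T)} (hs : MeasurableSet s)
    {c : ℝ≥0∞} (hc : c ≤ haarAddCircle s) : ∃ t ⊆ s, MeasurableSet t ∧ haarAddCircle t = c :=
  exists_subset_measure_eq_of_measure_preimage_Ioc_le
    (measurable_subtype_coe.comp (measurableEquivIoc T 0).measurable)
    (by simpa using (Fact.out : 0 < T).le) (fun z => (equivIoc T 0 z).2)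
    (ENNReal.inv_ne_top.2 (ENNReal.ofReal_ne_zero_iff.2 Fact.out))
    haarAddCircle_preimage_equivIoc_Ioc_le hs hc

end AddCircle

instance isProbabilityMeasure_μ : IsProbabilityMeasure μ :=
  inferInstanceAs (IsProbabilityMeasure AddCircle.haarAddCircle)

/-- If `1 ≤ p < q < ∞`, the only pointwise multiplier from `L^p(𝕋)` to
`L^q(𝕋)` is the zero function. -/
theorem multiplier_Lp_Lq_trivial (p q : ℝ≥0∞) (hp : 1 ≤ p) (hpq : p < q) (hq : q < ⊤)
    (a : 𝕋 → ℂ) (ha : AEStronglyMeasurable a μ)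
    (h : ∀ f : 𝕋 → ℂ, MemLp f p μ → MemLp (fun t => a t * f t) q μ) :
    a =ᵐ[μ] fun _ => 0 := by
  by_contra ha0
  obtain ⟨ε, hε, hE⟩ := exists_measure_lt_enorm_ne_zero ha0
  obtain ⟨E, hE_sub, hE_meas, hE_ae⟩ :=
    (nullMeasurableSet_lt aemeasurable_const ha.enorm).exists_measurable_subset_ae_eq
  have hE0 : μ E ≠ 0 := (measure_congr hE_ae).trans_ne hE
  obtain ⟨A, hA_disj, hA_meas, hA_sub, hA_measure⟩ :=
    exists_pairwise_disjoint_measure_eq_mul_inv_two_pow (ν := μ)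
      (fun s hs => AddCircle.exists_subset_haarAddCircle_eq hs ENNReal.half_le_self)
      hE_meas (measure_ne_top μ E)
  have hp0 : p ≠ 0 := (zero_lt_one.trans_le hp).ne'
  have hq_pos : 0 < q.toReal := ENNReal.toReal_pos (hpq.trans' (pos_iff_ne_zero.2 hp0)).ne' hq.ne
  have hθ : 0 < 1 - p.toReal / q.toReal :=
    sub_pos.2 ((div_lt_one hq_pos).2 (ENNReal.toReal_strict_mono hq.ne hpq))
  have hA_sum : ∑' n, μ (A n) ^ (1 - p.toReal / q.toReal) ≠ ⊤ := by
    simp_rw [hA_measure, pow_succ', ← mul_assoc]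
    exact ENNReal.tsum_mul_pow_rpow_ne_top (by finiteness) (ENNReal.inv_lt_one.2 ENNReal.one_lt_two)
      hθ
  obtain ⟨f, hf, hf_mul⟩ := exists_memLp_not_memLp_mul hp0 hpq hq.ne hA_disj hA_meas
    (fun n => by simp [hA_measure n, hE0]) hA_sum hε fun n t ht => (hE_sub (hA_sub n ht)).le
  exact hf_mul (h f hf)

end
end

section
/- Let X, Y be Banach function spaces over 𝕋 with X ⊂ Y, L^∞ ⊂ X_o (the order continuous part of X), and Y having the Fatou property. Then M(X_o, Y) = M(X, Y) with equality of norms. -/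
open MeasureTheory Filter Topology ComplexConjugate
open scoped ENNReal

noncomputable section

/-!
Truncating `f ∈ X` at height `n` gives bounded functions, which lie in `X_o`, increasing to `|f|`;
by the Fatou property of `Y`, `‖a f‖_Y` is the supremum of `‖a f_n‖_Y`, which gives the equality
of norms. Finiteness of that supremum follows from a gliding hump: if it were infinite, a weighted
sum `∑ 2⁻ᵏ |f_{n_k}|` with fast growing `‖a f_{n_k}‖_Y` would still be dominated by `2|f|` with
tails of norm `≤ 2^{1-K} ‖f‖_X`, hence lie in `X_o` (which is closed), while `a` would map it
outside `Y`.
-/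

section NormTruncation

variable {α E : Type*} [NormedAddCommGroup E]

def normTruncation (n : ℕ) (f : α → E) : α → E :=
  {t | ‖f t‖ ≤ n}.indicator f

theorem norm_normTruncation_le (n : ℕ) (f : α → E) (t : α) :
    ‖normTruncation n f t‖ ≤ ‖f t‖ :=
  norm_indicator_le_norm_self _ _

theorem norm_normTruncation_le_nat (n : ℕ) (f : α → E) (t : α) :
    ‖normTruncation n f t‖ ≤ n := by
  by_cases ht : ‖f t‖ ≤ n <;> simp [normTruncation, ht]

theorem monotone_norm_normTruncation (f : α → E) (t : α) :
    Monotone fun n => ‖normTruncation n f t‖ := by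
  intro m n hmn
  by_cases ht : ‖f t‖ ≤ m
  · have htn : ‖f t‖ ≤ n := ht.trans (Nat.cast_le.2 hmn)
    simp [normTruncation, ht, htn]
  · simp [normTruncation, ht]

theorem tendsto_norm_normTruncation (f : α → E) (t : α) :
    Tendsto (fun n => ‖normTruncation n f t‖) atTop (𝓝 ‖f t‖) := by
  refine tendsto_const_nhds.congr' ((eventually_ge_atTop ⌈‖f t‖⌉₊).mono fun n hn => ?_)
  have ht : ‖f t‖ ≤ n := Nat.ceil_le.1 hn
  simp [normTruncation, ht]

variable [MeasurableSpace α]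

theorem MeasureTheory.StronglyMeasurable.normTruncation {f : α → E} (hf : StronglyMeasurable f)
    (n : ℕ) :
    StronglyMeasurable (normTruncation n f) :=
  hf.indicator (hf.norm.measurableSet_le stronglyMeasurable_const)

theorem memLp_top_normTruncation {ν : Measure α} {f : α → E} (hf : StronglyMeasurable f)
    (n : ℕ) :
    MemLp (normTruncation n f) ⊤ ν :=
  memLp_top_of_bound (hf.normTruncation n).aestronglyMeasurable n
    (Eventually.of_forall (norm_normTruncation_le_nat n f))

end NormTruncation

theorem FatouN.N_mul_eq_iSup_normTruncation {Y : NormFn} (hY : FatouN Y) {a f : 𝕋 → ℂ}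
    (ha : AEStronglyMeasurable a μ) (hf : StronglyMeasurable f) :
    Y (fun t => a t * f t) = ⨆ n : ℕ, Y (fun t => a t * normTruncation n f t) := by
  refine hY _ _ (fun n => ha.mul (hf.normTruncation n).aestronglyMeasurable)
    (ha.mul hf.aestronglyMeasurable) (Eventually.of_forall fun t => ⟨fun m n hmn => ?_, ?_⟩)
  · simpa only [norm_mul] using
      mul_le_mul_of_nonneg_left (monotone_norm_normTruncation f t hmn) (norm_nonneg (a t))
  · simpa only [norm_mul] using (tendsto_norm_normTruncation f t).const_mul ‖a t‖

theorem min_one_div_mul_self {x y : ℝ} (hx : 0 ≤ x) (hy : 0 ≤ y) :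
    min 1 (y / x) * x = min x y := by
  rcases hx.eq_or_lt with rfl | hx
  · simp [hy]
  · rw [min_mul_of_nonneg _ _ hx.le, one_mul, div_mul_cancel₀ _ hx.ne']

theorem exists_add_norm_eq_min {α E F : Type*} [MeasurableSpace α] [NormedAddCommGroup E]
    [NormedSpace ℝ E] [NormedAddCommGroup F] {ν : Measure α} {g : α → E} {u : α → F}
    (hg : AEStronglyMeasurable g ν) (hu : AEStronglyMeasurable u ν) :
    ∃ U V : α → E, AEStronglyMeasurable U ν ∧ AEStronglyMeasurable V ν ∧ g = U + V ∧
      ∀ t, ‖U t‖ = min ‖g t‖ ‖u t‖ ∧ ‖V t‖ = ‖g t‖ - min ‖g t‖ ‖u t‖ := by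
  set c : α → ℝ := fun t => min 1 (‖u t‖ / ‖g t‖)
  have hc : AEStronglyMeasurable c ν := aestronglyMeasurable_const.inf (hu.norm.div₀ hg.norm)
  have hc0 : ∀ t, 0 ≤ c t := fun t => le_min zero_le_one (by positivity)
  have hc1 : ∀ t, c t ≤ 1 := fun t => min_le_left _ _
  refine ⟨fun t => c t • g t, fun t => (1 - c t) • g t, hc.smul hg,
    (aestronglyMeasurable_const.sub hc).smul hg, funext fun t => by simp [← add_smul],
    fun t => ⟨?_, ?_⟩⟩
  · rw [norm_smul, Real.norm_of_nonneg (hc0 t),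
      min_one_div_mul_self (norm_nonneg _) (norm_nonneg _)]
  · rw [norm_smul, Real.norm_of_nonneg (sub_nonneg.2 (hc1 t)), sub_mul, one_mul,
      min_one_div_mul_self (norm_nonneg _) (norm_nonneg _)]

namespace BFS

variable (X : BFS)

theorem N_mk {f : 𝕋 → ℂ} (hf : AEStronglyMeasurable f μ) : X.N (hf.mk f) = X.N f :=
  X.ae_congr _ _ hf.ae_eq_mk.symm

theorem N_mul_congr {a f g : 𝕋 → ℂ} (hfg : f =ᵐ[μ] g) :
    X.N (fun t => a t * f t) = X.N (fun t => a t * g t) :=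
  X.ae_congr _ _ (hfg.mono fun t ht => by simp only [ht])

theorem N_ofReal_mul {r : ℝ} (hr : 0 ≤ r) (f : 𝕋 → ℂ) :
    X.N (fun t => (r : ℂ) * f t) = ENNReal.ofReal r * X.N f := by
  rw [X.smul_eq, ← enorm_eq_nnnorm, ← ofReal_norm, Complex.norm_real, Real.norm_of_nonneg hr]

theorem orderContElemN_of_forall_le_add {h : 𝕋 → ℂ} (hh : MemN X.N h)
    (happrox : ∀ δ > 0, ∃ u w : 𝕋 → ℂ, OrderContElemN X.N u ∧ AEStronglyMeasurable w μ ∧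
      (∀ᵐ t ∂μ, ‖h t‖ ≤ ‖u t‖ + ‖w t‖) ∧ X.N w ≤ δ) :
    OrderContElemN X.N h := by
  refine ⟨hh, fun g hgm hgh hg0 => ENNReal.tendsto_nhds_zero.2 fun ε hε => ?_⟩
  obtain ⟨u, w, hu, hwm, hhuw, hw⟩ := happrox (ε / 2) (ENNReal.half_pos hε.ne')
  -- cut each `g m` at height `‖u‖`: `u` controls the part below, `w` the part above
  choose U V hUm hVm hUV hUV_norm using fun m => exists_add_norm_eq_min (hgm m) hu.1.1
  have hU : Tendsto (fun m => X.N (U m)) atTop (𝓝 0) := by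
    refine hu.2 U hUm (fun m => Eventually.of_forall fun t => ?_) ?_
    · rw [(hUV_norm m t).1]
      exact min_le_right _ _
    · filter_upwards [hg0] with t ht
      refine squeeze_zero (fun m => norm_nonneg _) (fun m => ?_) ht
      rw [(hUV_norm m t).1]
      exact min_le_left _ _
  have hV : ∀ m, X.N (V m) ≤ ε / 2 := by
    refine fun m => (X.ideal w (V m) (hVm m) ?_).trans hw
    filter_upwards [hhuw, hgh m] with t hhuwt hght
    rw [(hUV_norm m t).2, min_def]
    split_ifs <;> linarith [norm_nonneg (w t)]
  filter_upwards [ENNReal.tendsto_nhds_zero.1 hU (ε / 2) (ENNReal.half_pos hε.ne')] with m hm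
  calc X.N (g m) = X.N (U m + V m) := by rw [← hUV m]
    _ ≤ X.N (U m) + X.N (V m) := X.add_le _ _
    _ ≤ ε / 2 + ε / 2 := add_le_add hm (hV m)
    _ = ε := ENNReal.add_halves ε

end BFS

section HumpSum

variable {α : Type*} {g : ℕ → α → ℂ} {f : α → ℂ}

theorem summable_geometric_inv_two : Summable fun k : ℕ => (2 : ℝ)⁻¹ ^ k :=
  summable_geometric_of_lt_one (by norm_num) (by norm_num)

def humpSum (g : ℕ → α → ℂ) : α → ℂ :=
  fun t => ((∑' k, (2 : ℝ)⁻¹ ^ k * ‖g k t‖ : ℝ) : ℂ)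

theorem summable_humpSum (hgf : ∀ k t, ‖g k t‖ ≤ ‖f t‖) (t : α) :
    Summable fun k => (2 : ℝ)⁻¹ ^ k * ‖g k t‖ :=
  (summable_geometric_inv_two.mul_right ‖f t‖).of_nonneg_of_le (fun k => by positivity)
    fun k => mul_le_mul_of_nonneg_left (hgf k t) (by positivity)

theorem norm_humpSum (g : ℕ → α → ℂ) (t : α) :
    ‖humpSum g t‖ = ∑' k, (2 : ℝ)⁻¹ ^ k * ‖g k t‖ := by
  rw [humpSum, Complex.norm_real, Real.norm_of_nonneg (tsum_nonneg fun k => by positivity)]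

theorem le_norm_humpSum (hgf : ∀ k t, ‖g k t‖ ≤ ‖f t‖) (k : ℕ) (t : α) :
    (2 : ℝ)⁻¹ ^ k * ‖g k t‖ ≤ ‖humpSum g t‖ := by
  rw [norm_humpSum]
  exact (summable_humpSum hgf t).le_tsum k fun j _ => mul_nonneg (by positivity) (norm_nonneg _)

theorem norm_humpSum_le_sum_add (hgf : ∀ k t, ‖g k t‖ ≤ ‖f t‖) (K : ℕ) (t : α) :
    ‖humpSum g t‖ ≤ ∑ k ∈ Finset.range K, (2 : ℝ)⁻¹ ^ k * ‖g k t‖ + 2 * 2⁻¹ ^ K * ‖f t‖ := by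
  have hs := summable_humpSum hgf t
  rw [norm_humpSum, ← hs.sum_add_tsum_nat_add K]
  gcongr
  calc ∑' k, (2 : ℝ)⁻¹ ^ (k + K) * ‖g (k + K) t‖
      ≤ ∑' k, (2 : ℝ)⁻¹ ^ k * (2⁻¹ ^ K * ‖f t‖) :=
        ((summable_nat_add_iff K).2 hs).tsum_le_tsum (fun k => by
          rw [pow_add, mul_assoc]
          gcongr
          exact hgf _ t) (summable_geometric_inv_two.mul_right _)
    _ = 2 * 2⁻¹ ^ K * ‖f t‖ := by rw [tsum_mul_right, tsum_geometric_inv_two, mul_assoc]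

theorem aestronglyMeasurable_humpSum [MeasurableSpace α] {ν : Measure α}
    (hg : ∀ k, AEStronglyMeasurable (g k) ν) (hgf : ∀ k t, ‖g k t‖ ≤ ‖f t‖) :
    AEStronglyMeasurable (humpSum g) ν :=
  Complex.continuous_ofReal.comp_aestronglyMeasurable <|
    aestronglyMeasurable_of_tendsto_ae atTop
      (fun _ => Finset.aestronglyMeasurable_fun_sum _ fun k _ => (hg k).norm.const_mul _)
      (Eventually.of_forall fun t => (summable_humpSum hgf t).hasSum.tendsto_sum_nat)

end HumpSum

theorem BFS.orderContElemN_humpSum (X : BFS)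
    (hLinf : ∀ f : 𝕋 → ℂ, MemLp f ⊤ μ → OrderContElemN X.N f)
    {f : 𝕋 → ℂ} (hf : MemN X.N f) {g : ℕ → 𝕋 → ℂ} (hg : ∀ k, MemLp (g k) ⊤ μ)
    (hgf : ∀ k t, ‖g k t‖ ≤ ‖f t‖) :
    OrderContElemN X.N (humpSum g) := by
  have hNf : ∀ {r : ℝ}, 0 ≤ r → X.N (fun t => (r : ℂ) * f t) = ENNReal.ofReal r * X.N f :=
    fun hr => X.N_ofReal_mul hr f
  have hmem : MemN X.N (humpSum g) := by
    refine ⟨aestronglyMeasurable_humpSum (fun k => (hg k).1) hgf, ?_⟩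
    calc X.N (humpSum g) ≤ X.N (fun t => ((2 : ℝ) : ℂ) * f t) := by
          refine X.ideal _ _ (aestronglyMeasurable_humpSum (fun k => (hg k).1) hgf)
            (Eventually.of_forall fun t => ?_)
          simpa using norm_humpSum_le_sum_add hgf 0 t
      _ < ⊤ := by rw [hNf zero_le_two]; exact ENNReal.mul_lt_top ENNReal.ofReal_lt_top hf.2
  have htail : Tendsto (fun K : ℕ => ENNReal.ofReal (2 * 2⁻¹ ^ K) * X.N f) atTop (𝓝 0) := by
    have h := (tendsto_pow_atTop_nhds_zero_of_lt_one (r := (2 : ℝ)⁻¹) (by norm_num) (by norm_num))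
      |>.const_mul 2
    simpa using ENNReal.Tendsto.mul_const ((ENNReal.continuous_ofReal.tendsto _).comp h)
      (Or.inr hf.2.ne)
  refine X.orderContElemN_of_forall_le_add hmem fun δ hδ => ?_
  obtain ⟨K, hK⟩ := (ENNReal.tendsto_nhds_zero.1 htail δ hδ).exists
  refine ⟨fun t => ((∑ k ∈ Finset.range K, (2 : ℝ)⁻¹ ^ k * ‖g k t‖ : ℝ) : ℂ),
    fun t => ((2 * 2⁻¹ ^ K : ℝ) : ℂ) * f t, hLinf _ ?_, hf.1.const_mul _,
    Eventually.of_forall fun t => ?_, by rwa [hNf (by positivity)]⟩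
  · have hsum : MemLp (fun t => ∑ k ∈ Finset.range K, (2 : ℝ)⁻¹ ^ k * ‖g k t‖) ⊤ μ :=
      memLp_finsetSum _ fun k _ => (hg k).norm.const_mul _
    exact hsum.ofReal
  · rw [Complex.norm_real, norm_mul, Complex.norm_real, Real.norm_of_nonneg (by positivity),
      Real.norm_of_nonneg (by positivity)]
    exact norm_humpSum_le_sum_add hgf K t

theorem ENNReal.ofReal_inv_two_pow (k : ℕ) : ENNReal.ofReal ((2 : ℝ)⁻¹ ^ k) = 2⁻¹ ^ k := by
  rw [ENNReal.ofReal_pow (by norm_num), ENNReal.ofReal_inv_of_pos two_pos, ENNReal.ofReal_ofNat]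

theorem N_mul_lt_top_of_forall_orderContElemN (X Y : BFS)
    (hLinf : ∀ f : 𝕋 → ℂ, MemLp f ⊤ μ → OrderContElemN X.N f) (hFatou : FatouN Y.N)
    {a : 𝕋 → ℂ} (ha : AEStronglyMeasurable a μ)
    (H : ∀ g, OrderContElemN X.N g → MemN Y.N (fun t => a t * g t))
    {f : 𝕋 → ℂ} (hf : MemN X.N f) (hfm : StronglyMeasurable f) :
    Y.N (fun t => a t * f t) < ⊤ := by
  rw [hFatou.N_mul_eq_iSup_normTruncation ha hfm, lt_top_iff_ne_top]
  intro htop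
  have hbig : ∀ k : ℕ, ∃ m, (4 : ℝ≥0∞) ^ k < Y.N (fun t => a t * normTruncation m f t) :=
    fun k => lt_iSup_iff.1 (by rw [htop]; exact ENNReal.pow_lt_top (by simp))
  choose n hn using hbig
  set g := fun k => normTruncation (n k) f
  have hgf : ∀ k t, ‖g k t‖ ≤ ‖f t‖ := fun k => norm_normTruncation_le _ f
  have hh := H _
    (X.orderContElemN_humpSum hLinf hf (fun k => memLp_top_normTruncation hfm _) hgf)
  have hlow : ∀ k : ℕ, (2 : ℝ≥0∞) ^ k ≤ Y.N (fun t => a t * humpSum g t) := fun k =>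
    calc (2 : ℝ≥0∞) ^ k = 2⁻¹ ^ k * 4 ^ k := by
          rw [← mul_pow, show (2 : ℝ≥0∞)⁻¹ * 4 = 2 by
            rw [show (4 : ℝ≥0∞) = 2 * 2 by norm_num, ← mul_assoc, ENNReal.inv_mul_cancel] <;> simp]
      _ ≤ 2⁻¹ ^ k * Y.N (fun t => a t * g k t) := by gcongr; exact (hn k).le
      _ = Y.N (fun t => ((2⁻¹ ^ k : ℝ) : ℂ) * (a t * g k t)) := by
          rw [Y.N_ofReal_mul (by positivity), ENNReal.ofReal_inv_two_pow]
      _ ≤ Y.N (fun t => a t * humpSum g t) := by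
          refine Y.ideal _ _ ((ha.mul (hfm.normTruncation _).aestronglyMeasurable).const_mul _)
            (Eventually.of_forall fun t => ?_)
          rw [norm_mul, norm_mul, norm_mul, Complex.norm_real, Real.norm_of_nonneg (by positivity),
            mul_left_comm]
          exact mul_le_mul_of_nonneg_left (le_norm_humpSum hgf k t) (norm_nonneg _)
  refine hh.2.ne (ENNReal.eq_top_of_forall_nnreal_le fun r => ?_)
  obtain ⟨k, hk⟩ := pow_unbounded_of_one_lt r (one_lt_two : (1 : NNReal) < 2)
  exact le_trans (by exact_mod_cast hk.le) (hlow k)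

theorem multiplier_order_continuous_part_general (X Y : BFS)
    (hLinf : ∀ f : 𝕋 → ℂ, MemLp f ⊤ μ → OrderContElemN X.N f)
    (hFatou : FatouN Y.N)
    (a : 𝕋 → ℂ) (ha : AEStronglyMeasurable a μ) :
    ((∀ f, OrderContElemN X.N f → MemN Y.N (fun t => a t * f t)) ↔
      (∀ f, MemN X.N f → MemN Y.N (fun t => a t * f t))) ∧
    (⨆ f : {f : 𝕋 → ℂ // OrderContElemN X.N f ∧ X.N f ≤ 1},
        Y.N (fun t => a t * f.1 t)) = multN X.N Y.N a := by
  refine ⟨⟨fun H f hf => ⟨ha.mul hf.1, ?_⟩, fun H f hf => H f hf.1⟩, le_antisymm ?_ ?_⟩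
  · rw [Y.N_mul_congr hf.1.ae_eq_mk]
    exact N_mul_lt_top_of_forall_orderContElemN X Y hLinf hFatou ha H
      ⟨hf.1.stronglyMeasurable_mk.aestronglyMeasurable, (X.N_mk hf.1).trans_lt hf.2⟩
      hf.1.stronglyMeasurable_mk
  · exact iSup_le fun f => le_iSup_of_le ⟨f.1, f.2.1.1.1, f.2.2⟩ le_rfl
  · refine iSup_le fun ⟨f, hfm, hf1⟩ => ?_
    have hf' := hfm.stronglyMeasurable_mk
    rw [Y.N_mul_congr hfm.ae_eq_mk, hFatou.N_mul_eq_iSup_normTruncation ha hf']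
    refine iSup_le fun n => le_iSup_of_le
      ⟨_, hLinf _ (memLp_top_normTruncation hf' n), ?_⟩ le_rfl
    calc X.N (normTruncation n (hfm.mk f)) ≤ X.N (hfm.mk f) :=
          X.ideal _ _ (hf'.normTruncation n).aestronglyMeasurable
            (Eventually.of_forall (norm_normTruncation_le n _))
      _ ≤ 1 := (X.N_mk hfm).trans_le hf1

/-- If `X ⊂ Y` are Banach function spaces over `𝕋`, `L^∞ ⊂ X_o` (the
order continuous part of `X`) and `Y` has the Fatou property, then `M(X_o, Y) = M(X, Y)`
with equality of norms. -/
theorem multiplier_order_continuous_part (X Y : BFS)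
    (hXY : ∀ f, MemN X.N f → MemN Y.N f)
    (hLinf : ∀ f : 𝕋 → ℂ, MemLp f ⊤ μ → OrderContElemN X.N f)
    (hFatou : FatouN Y.N)
    (a : 𝕋 → ℂ) (ha : AEStronglyMeasurable a μ) :
    ((∀ f, OrderContElemN X.N f → MemN Y.N (fun t => a t * f t)) ↔
      (∀ f, MemN X.N f → MemN Y.N (fun t => a t * f t))) ∧
    (⨆ f : {f : 𝕋 → ℂ // OrderContElemN X.N f ∧ X.N f ≤ 1},
        Y.N (fun t => a t * f.1 t)) = multN X.N Y.N a :=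
  multiplier_order_continuous_part_general X Y hLinf hFatou a ha

end
end
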